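/- arXiv:0907.2926 — 3 statements merged into one kernel-verified Lean document; each statement's English description precedes it below -/
import Mathlib

section
/- Let 0 < a < 1. The function R(x) = Γ(x)/Γ(x−a) is strictly increasing for x > a (where Γ is the Gamma function). -/
/-!
`log ∘ Γ` is strictly convex on `(0, ∞)`: by the functional equation it equals
`x ↦ log Γ(x + 1) - log x`, a convex function plus a strictly convex one. For a strictly convex
function the increment `f x - f (x - a)` over a window of fixed width `a > 0` strictly increases
with `x`, and `Γ x / Γ (x - a)` is the exponential of that increment for `f = log ∘ Γ`.
-/

open Real Set

theorem StrictConvexOn.strictMonoOn_sub_sub {𝕜 : Type*} [Field 𝕜] [LinearOrder 𝕜]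
    [IsStrictOrderedRing 𝕜] {f : 𝕜 → 𝕜} {s : Set 𝕜}
    (hf : StrictConvexOn 𝕜 s f) {h : 𝕜} (hh : 0 < h) :
    StrictMonoOn (fun x => f x - f (x - h)) {x | x - h ∈ s ∧ x ∈ s} := by
  rintro x ⟨hxh, -⟩ y ⟨-, hy⟩ hxy
  have hsecant : (f x - f (x - h)) / (x - (x - h)) < (f y - f (y - h)) / (y - (y - h)) :=
    calc (f x - f (x - h)) / (x - (x - h))
        < (f y - f (x - h)) / (y - (x - h)) :=
          hf.secant_strict_mono_aux2 hxh hy (by linarith) hxy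
      _ < (f y - f (y - h)) / (y - (y - h)) :=
          hf.secant_strict_mono_aux3 hxh hy (by linarith) (by linarith)
  simpa only [sub_sub_cancel, div_lt_div_iff_of_pos_right hh] using hsecant

namespace Real

theorem strictConvexOn_log_Gamma : StrictConvexOn ℝ (Ioi 0) (log ∘ Gamma) := by
  have hshift : ConvexOn ℝ (Ioi 0) (fun x => log (Gamma (x + 1))) := by
    refine (convexOn_log_Gamma.translate_left 1).subset (fun x (hx : 0 < x) => ?_) (convex_Ioi 0)
    change 0 < 1 + x
    linarith
  refine (hshift.add_strictConvexOn strictConcaveOn_log_Ioi.neg).congr fun x (hx : 0 < x) => ?_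
  simp only [Pi.add_apply, Pi.neg_apply, Function.comp_apply, Gamma_add_one hx.ne',
    log_mul hx.ne' (Gamma_pos_of_pos hx).ne']
  ring

end Real

theorem gamma_ratio_strictMonoOn_general (a : ℝ) (ha0 : 0 < a) :
    StrictMonoOn (fun x : ℝ => Real.Gamma x / Real.Gamma (x - a)) (Set.Ioi a) := by
  have hwindow : Ioi a ⊆ {x | x - a ∈ Ioi 0 ∧ x ∈ Ioi 0} := fun x (hx : a < x) =>
    ⟨sub_pos.mpr hx, ha0.trans hx⟩
  have hincr := (strictConvexOn_log_Gamma.strictMonoOn_sub_sub ha0).mono hwindow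
  refine (exp_strictMono.comp_strictMonoOn hincr).congr fun x (hx : a < x) => ?_
  simp only [Function.comp_apply, exp_sub, exp_log (Gamma_pos_of_pos (ha0.trans hx)),
    exp_log (Gamma_pos_of_pos (sub_pos.mpr hx))]

theorem gamma_ratio_strictMonoOn (a : ℝ) (ha0 : 0 < a) (ha1 : a < 1) :
    StrictMonoOn (fun x : ℝ => Real.Gamma x / Real.Gamma (x - a)) (Set.Ioi a) :=
  gamma_ratio_strictMonoOn_general a ha0
end

section
/- Let 0 < a < 1. The function S(x) = Γ(x+a)/(x^a · Γ(x)) is strictly increasing for x > 0. -/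
/-!
Log-convexity of `Γ` yields Wendel's bounds `(x / (x + a)) ^ (1 - a) ≤ S x ≤ 1`, so `S x → 1`
as `x → ∞`. The functional equation of `Γ` gives `S t = G t * S (t + 1)` with
`G t = (t + 1) ^ a * t ^ (1 - a) / (t + a)`, and `G` is strictly increasing since
`(log G)' t = a (1 - a) / (t (t + 1) (t + a)) > 0`. Hence for `x < y` the ratio
`S (x + n) / S (y + n)` increases strictly in `n` and tends to `1`, so `S x < S y`.
-/

open Real Set Filter Topology

namespace Real

theorem Gamma_add_le_rpow_mul_Gamma {x a : ℝ} (hx : 0 < x) (ha0 : 0 < a) (ha1 : a < 1) :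
    Gamma (x + a) ≤ x ^ a * Gamma x := by
  have hconv := Gamma_mul_add_mul_le_rpow_Gamma_mul_rpow_Gamma hx (by linarith : 0 < x + 1)
    (by linarith : 0 < 1 - a) ha0 (by ring)
  rwa [show (1 - a) * x + a * (x + 1) = x + a by ring, Gamma_add_one hx.ne',
    mul_rpow hx.le (Gamma_pos_of_pos hx).le, mul_left_comm, ← rpow_add (Gamma_pos_of_pos hx),
    sub_add_cancel, rpow_one] at hconv

theorem mul_Gamma_le_rpow_mul_Gamma_add {x a : ℝ} (hx : 0 < x) (ha0 : 0 < a) (ha1 : a < 1) :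
    x * Gamma x ≤ (x + a) ^ (1 - a) * Gamma (x + a) := by
  have := Gamma_add_le_rpow_mul_Gamma (by linarith : 0 < x + a) (by linarith : 0 < 1 - a)
    (by linarith : 1 - a < 1)
  rwa [add_add_sub_cancel, Gamma_add_one hx.ne'] at this

noncomputable def gammaRatio (a x : ℝ) : ℝ := x ^ (-a) * Gamma (x + a) / Gamma x

theorem gammaRatio_pos {a x : ℝ} (hx : 0 < x) (ha : 0 ≤ a) : 0 < gammaRatio a x := by
  unfold gammaRatio
  have := Gamma_pos_of_pos (by positivity : 0 < x + a)
  have := Gamma_pos_of_pos hx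
  positivity

theorem gammaRatio_le_one {a x : ℝ} (hx : 0 < x) (ha0 : 0 < a) (ha1 : a < 1) :
    gammaRatio a x ≤ 1 := by
  have hΓ := Gamma_pos_of_pos hx
  rw [gammaRatio, div_le_one hΓ, rpow_neg hx.le, inv_mul_le_iff₀ (by positivity)]
  exact Gamma_add_le_rpow_mul_Gamma hx ha0 ha1

theorem rpow_div_add_le_gammaRatio {a x : ℝ} (hx : 0 < x) (ha0 : 0 < a) (ha1 : a < 1) :
    (x / (x + a)) ^ (1 - a) ≤ gammaRatio a x := by
  have hΓ := Gamma_pos_of_pos hx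
  have hxa : 0 < x + a := by positivity
  calc (x / (x + a)) ^ (1 - a) = x ^ (-a) * (x * Gamma x) / ((x + a) ^ (1 - a) * Gamma x) := by
        rw [div_rpow hx.le hxa.le, rpow_sub hx, rpow_one, rpow_neg hx.le]
        field_simp
    _ ≤ x ^ (-a) * ((x + a) ^ (1 - a) * Gamma (x + a)) / ((x + a) ^ (1 - a) * Gamma x) := by
        gcongr x ^ (-a) * ?_ / _
        exact mul_Gamma_le_rpow_mul_Gamma_add hx ha0 ha1
    _ = gammaRatio a x := by
        rw [gammaRatio]
        field_simp

theorem tendsto_gammaRatio_atTop {a : ℝ} (ha0 : 0 < a) (ha1 : a < 1) :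
    Tendsto (gammaRatio a) atTop (𝓝 1) := by
  have hbase : Tendsto (fun x => x / (x + a)) atTop (𝓝 1) := by
    have : Tendsto (fun x => 1 - a / (x + a)) atTop (𝓝 (1 - 0)) :=
      tendsto_const_nhds.sub
        (tendsto_const_nhds.div_atTop (tendsto_atTop_add_const_right _ a tendsto_id))
    rw [sub_zero] at this
    refine this.congr' ?_
    filter_upwards [eventually_gt_atTop 0] with x hx
    field_simp
    ring
  have hlower := hbase.rpow_const (p := 1 - a) (Or.inl one_ne_zero)
  rw [one_rpow] at hlower
  refine tendsto_of_tendsto_of_tendsto_of_le_of_le' hlower tendsto_const_nhds ?_ ?_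
  · filter_upwards [eventually_gt_atTop 0] with x hx using rpow_div_add_le_gammaRatio hx ha0 ha1
  · filter_upwards [eventually_gt_atTop 0] with x hx using gammaRatio_le_one hx ha0 ha1

theorem gammaRatio_eq_mul_gammaRatio_add_one {a t : ℝ} (ht : 0 < t) (ha : 0 ≤ a) :
    gammaRatio a t = (t + 1) ^ a * t ^ (1 - a) / (t + a) * gammaRatio a (t + 1) := by
  have hta : 0 < t + a := by positivity
  have := Gamma_pos_of_pos ht
  have := Gamma_pos_of_pos hta
  rw [gammaRatio, gammaRatio, add_right_comm, Gamma_add_one hta.ne', Gamma_add_one ht.ne',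
    rpow_sub ht, rpow_one, rpow_neg ht.le, rpow_neg (by positivity)]
  field_simp

theorem strictMonoOn_rpow_mul_rpow_div_add {a : ℝ} (ha0 : 0 < a) (ha1 : a < 1) :
    StrictMonoOn (fun t : ℝ => (t + 1) ^ a * t ^ (1 - a) / (t + a)) (Ioi 0) := by
  set g : ℝ → ℝ := fun t => a * log (t + 1) + (1 - a) * log t - log (t + a)
  have hderiv : ∀ t > (0 : ℝ),
      HasDerivAt g (a * (1 - a) / (t * (t + 1) * (t + a))) t := by
    intro t ht
    have h1 : t + 1 ≠ 0 := by positivity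
    have ha : t + a ≠ 0 := by positivity
    refine ((((hasDerivAt_id t).add_const 1).log h1).const_mul a |>.add
      (((hasDerivAt_id t).log ht.ne').const_mul (1 - a)) |>.sub
      (((hasDerivAt_id t).add_const a).log ha)).congr_deriv ?_
    simp only [id]
    field_simp
    ring
  have hg : StrictMonoOn g (Ioi 0) := by
    refine strictMonoOn_of_deriv_pos (convex_Ioi 0)
      (fun t ht => (hderiv t ht).continuousAt.continuousWithinAt) fun t ht => ?_
    rw [interior_Ioi] at ht
    have ht : 0 < t := ht
    rw [(hderiv t ht).deriv]
    have : 0 < 1 - a := by linarith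
    positivity
  have hexp : ∀ t > (0 : ℝ), (t + 1) ^ a * t ^ (1 - a) / (t + a) = exp (g t) := by
    intro t ht
    rw [exp_sub, exp_add, exp_log (by positivity), mul_comm a, mul_comm (1 - a),
      exp_mul, exp_mul, exp_log (by positivity), exp_log ht]
  intro s hs t ht hst
  dsimp only
  rw [hexp s hs, hexp t ht]
  exact exp_lt_exp.mpr (hg hs ht hst)

theorem gammaRatio_div_gammaRatio_lt_add_one {a x y : ℝ} (hx : 0 < x) (hxy : x < y)
    (ha0 : 0 < a) (ha1 : a < 1) :
    gammaRatio a x / gammaRatio a y < gammaRatio a (x + 1) / gammaRatio a (y + 1) := by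
  have hy : 0 < y := hx.trans hxy
  have hstep := strictMonoOn_rpow_mul_rpow_div_add ha0 ha1 hx hy hxy
  have hGy : 0 < (y + 1) ^ a * y ^ (1 - a) / (y + a) := by positivity
  rw [gammaRatio_eq_mul_gammaRatio_add_one hx ha0.le,
    gammaRatio_eq_mul_gammaRatio_add_one hy ha0.le, mul_div_mul_comm]
  exact mul_lt_of_lt_one_left
    (div_pos (gammaRatio_pos (by positivity) ha0.le) (gammaRatio_pos (by positivity) ha0.le))
    ((div_lt_one hGy).2 hstep)

end Real

theorem gamma_ratio_scaled_strictMonoOn (a : ℝ) (ha0 : 0 < a) (ha1 : a < 1) :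
    StrictMonoOn (fun x : ℝ => x ^ (-a) * Real.Gamma (x + a) / Real.Gamma x) (Set.Ioi (0 : ℝ)) := by
  intro x (hx : 0 < x) y (hy : 0 < y) hxy
  set q : ℕ → ℝ := fun n => gammaRatio a (x + n) / gammaRatio a (y + n)
  have hq_mono : StrictMono q := strictMono_nat_of_lt_succ fun n => by
    simpa only [q, Nat.cast_succ, add_assoc] using
      gammaRatio_div_gammaRatio_lt_add_one (by positivity : 0 < x + n)
        (by linarith : x + n < y + n) ha0 ha1
  have hq_lim : Tendsto q atTop (𝓝 1) := by
    have hS := tendsto_gammaRatio_atTop ha0 ha1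
    have := (hS.comp (tendsto_atTop_add_const_left _ x tendsto_natCast_atTop_atTop)).div
      (hS.comp (tendsto_atTop_add_const_left _ y tendsto_natCast_atTop_atTop)) one_ne_zero
    rwa [div_one] at this
  have hq0 : q 0 < 1 := (hq_mono zero_lt_one).trans_le (hq_mono.monotone.ge_of_tendsto hq_lim 1)
  simp only [q, Nat.cast_zero, add_zero] at hq0
  exact (div_lt_one (gammaRatio_pos hy ha0.le)).1 hq0
end

section
/- For 0 < a < 1, the function y ↦ y^a (y−1)/(y−(1−a)) is strictly increasing on (1−a, ∞). -/
/-! The derivative of `y ^ a * (y - 1) / (y - (1 - a))` is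
`a * y ^ (a - 1) * (y * (y - (1 - a)) + (1 - a)) / (y - (1 - a)) ^ 2`,
and every factor is positive for `y > 1 - a > 0`. -/

open Set

lemma hasDerivAt_rpow_mul_sub_one_div_sub {a c x : ℝ} (hx : 0 < x) (hxc : x ≠ c) :
    HasDerivAt (fun y : ℝ => y ^ a * (y - 1) / (y - c))
      (x ^ (a - 1) * (a * (x - 1) * (x - c) + (1 - c) * x) / (x - c) ^ 2) x := by
  have hpow : HasDerivAt (fun y : ℝ => y ^ a) (a * x ^ (a - 1)) x := by
    simpa using Real.hasDerivAt_rpow_const (p := a) (Or.inl hx.ne')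
  have hquot : HasDerivAt (fun y : ℝ => y ^ a * (y - 1) / (y - c))
      (((a * x ^ (a - 1) * (x - 1) + x ^ a * 1) * (x - c) - x ^ a * (x - 1) * 1) / (x - c) ^ 2) x :=
    (hpow.mul ((hasDerivAt_id' x).sub_const 1)).div ((hasDerivAt_id' x).sub_const c)
      (sub_ne_zero.mpr hxc)
  convert hquot using 2
  rw [show x ^ a = x ^ (a - 1) * x by rw [← Real.rpow_add_one hx.ne']; ring_nf]
  ring

theorem rpow_quotient_strictMonoOn (a : ℝ) (ha0 : 0 < a) (ha1 : a < 1) :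
    StrictMonoOn (fun y : ℝ => y ^ a * (y - 1) / (y - (1 - a))) (Set.Ioi (1 - a)) := by
  have hc : 0 < 1 - a := by linarith
  have hderiv : ∀ x ∈ Ioi (1 - a), HasDerivAt (fun y : ℝ => y ^ a * (y - 1) / (y - (1 - a)))
      (x ^ (a - 1) * (a * (x - 1) * (x - (1 - a)) + (1 - (1 - a)) * x) / (x - (1 - a)) ^ 2) x :=
    fun x hx => hasDerivAt_rpow_mul_sub_one_div_sub (hc.trans hx) (ne_of_gt hx)
  refine strictMonoOn_of_deriv_pos (convex_Ioi _)
    (fun x hx => (hderiv x hx).continuousAt.continuousWithinAt) fun x hx => ?_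
  rw [interior_Ioi] at hx
  have hx' : 0 < x - (1 - a) := sub_pos.mpr hx
  rw [(hderiv x hx).deriv,
    show a * (x - 1) * (x - (1 - a)) + (1 - (1 - a)) * x = a * (x * (x - (1 - a)) + (1 - a)) by
      ring]
  have hpow := Real.rpow_pos_of_pos (hc.trans hx) (a - 1)
  have hquad : 0 < x * (x - (1 - a)) + (1 - a) := add_pos (mul_pos (hc.trans hx) hx') hc
  positivity
end
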